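/- arXiv:1612.07578 — 3 statements merged into one kernel-verified Lean document; each statement's English description precedes it below -/
import Mathlib

section
/- Let Q be a polynomial of degree m ≥ 1 with real coefficients q_k and q_m > 0, and suppose β > 0 satisfies 2πn = ∫₀^{β} Q'(x)√(x/(β−x)) dx. Then 8n = 2 q_1 β + 4 ∑_{k=2}^{m} k (2k choose k) q_k (β/4)^k. -/
/-!
Substituting `x = β t` turns `∫₀^β x^j √(x/(β-x)) dx` into `β^(j+1) B(j + 3/2, 1/2)`, and
`B(j + 3/2, 1/2) = Γ(j + 3/2) Γ(1/2) / Γ(j + 2) = π C(2j+2, j+1) / 4^(j+1)`.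
Hence `∫₀^β Q'(x) √(x/(β-x)) dx = π ∑ₖ k C(2k, k) q_k (β/4)^k`, whose `k = 1` term is `q₁ β / 2`.
-/

open Finset MeasureTheory
open scoped Nat

theorem Nat.centralBinom_succ_mul_factorial (j : ℕ) :
    centralBinom (j + 1) * (j + 1)! = 2 ^ (j + 1) * (2 * j + 1)‼ := by
  apply Nat.eq_of_mul_eq_mul_right (factorial_pos (j + 1))
  have h := choose_mul_factorial_mul_factorial (show j + 1 ≤ 2 * (j + 1) by omega)
  rw [show 2 * (j + 1) - (j + 1) = j + 1 by omega] at h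
  calc centralBinom (j + 1) * (j + 1)! * (j + 1)! = (2 * j + 1 + 1)! := by
        rw [centralBinom_eq_two_mul_choose, h]; rfl
    _ = (2 * (j + 1))‼ * (2 * j + 1)‼ := by rw [factorial_eq_mul_doubleFactorial, mul_add_one]
    _ = 2 ^ (j + 1) * (2 * j + 1)‼ * (j + 1)! := by rw [doubleFactorial_two_mul]; ring

namespace Real

theorem ofReal_rpow_sub_one_mul_one_sub_rpow_sub_one {a b t : ℝ} (ht : t ∈ Set.uIcc 0 1) :
    ((t ^ (a - 1) * (1 - t) ^ (b - 1) : ℝ) : ℂ) =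
      (t : ℂ) ^ ((a : ℂ) - 1) * (1 - (t : ℂ)) ^ ((b : ℂ) - 1) := by
  rw [Set.uIcc_of_le zero_le_one] at ht
  push_cast [Complex.ofReal_cpow ht.1, Complex.ofReal_cpow (sub_nonneg.2 ht.2)]
  rfl

theorem intervalIntegrable_rpow_sub_one_mul_one_sub_rpow_sub_one {a b : ℝ} (ha : 0 < a)
    (hb : 0 < b) :
    IntervalIntegrable (fun t : ℝ ↦ t ^ (a - 1) * (1 - t) ^ (b - 1)) volume 0 1 := by
  have h := (Complex.betaIntegral_convergent (u := a) (v := b) (by simpa) (by simpa)).congr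
    fun t ht ↦ (ofReal_rpow_sub_one_mul_one_sub_rpow_sub_one (Set.uIoc_subset_uIcc ht)).symm
  have h₁ := h.1.re
  have h₂ := h.2.re
  simp only [RCLike.re_to_complex, Complex.ofReal_re] at h₁ h₂
  exact ⟨h₁, h₂⟩

theorem integral_rpow_sub_one_mul_one_sub_rpow_sub_one {a b : ℝ} (ha : 0 < a) (hb : 0 < b) :
    ∫ t in (0 : ℝ)..1, t ^ (a - 1) * (1 - t) ^ (b - 1) = Gamma a * Gamma b / Gamma (a + b) := by
  have h := Complex.Gamma_mul_Gamma_eq_betaIntegral (s := a) (t := b) (by simpa) (by simpa)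
  rw [Complex.betaIntegral, ← intervalIntegral.integral_congr
    fun t ht ↦ ofReal_rpow_sub_one_mul_one_sub_rpow_sub_one ht, intervalIntegral.integral_ofReal,
    ← Complex.ofReal_add, Complex.Gamma_ofReal, Complex.Gamma_ofReal, Complex.Gamma_ofReal] at h
  rw [eq_div_iff (Gamma_pos_of_pos (add_pos ha hb)).ne', mul_comm]
  exact_mod_cast h.symm

/-- At `t = 1` both sides vanish: `1 / 0 = 0` on the left and `0 ^ (-1/2) = 0` on the right. -/
theorem pow_mul_sqrt_div_one_sub_eq_rpow {j : ℕ} {t : ℝ} (ht : t ∈ Set.uIcc 0 1) :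
    t ^ j * √(t / (1 - t)) = t ^ ((j + 3 / 2 : ℝ) - 1) * (1 - t) ^ ((1 / 2 : ℝ) - 1) := by
  rw [Set.uIcc_of_le zero_le_one] at ht
  have h1t : 0 ≤ 1 - t := sub_nonneg.2 ht.2
  rw [sqrt_eq_rpow, div_rpow ht.1 h1t, show (j + 3 / 2 : ℝ) - 1 = j + 1 / 2 by ring,
    rpow_add' ht.1 (by positivity), rpow_natCast, show (1 / 2 : ℝ) - 1 = -(1 / 2) by norm_num,
    rpow_neg h1t, div_eq_mul_inv, mul_assoc]

theorem intervalIntegrable_pow_mul_sqrt_div_one_sub (j : ℕ) :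
    IntervalIntegrable (fun t : ℝ ↦ t ^ j * √(t / (1 - t))) volume 0 1 :=
  (intervalIntegrable_rpow_sub_one_mul_one_sub_rpow_sub_one (by positivity) one_half_pos).congr
    fun _ ht ↦ (pow_mul_sqrt_div_one_sub_eq_rpow (Set.uIoc_subset_uIcc ht)).symm

theorem integral_pow_mul_sqrt_div_one_sub (j : ℕ) :
    ∫ t in (0 : ℝ)..1, t ^ j * √(t / (1 - t)) = π * (j + 1).centralBinom / 4 ^ (j + 1) := by
  rw [intervalIntegral.integral_congr fun _ ht ↦ pow_mul_sqrt_div_one_sub_eq_rpow ht,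
    integral_rpow_sub_one_mul_one_sub_rpow_sub_one (by positivity) one_half_pos,
    show (j + 3 / 2 : ℝ) = (j : ℝ) + 1 + 1 / 2 by ring, Gamma_nat_add_one_add_half,
    show (j : ℝ) + 1 + 1 / 2 + 1 / 2 = (j + 1 : ℕ) + 1 by push_cast; ring, Gamma_nat_eq_factorial,
    Gamma_one_half_eq]
  have h : ((j + 1).centralBinom * (j + 1)! : ℝ) = 2 ^ (j + 1) * (2 * j + 1)‼ := by
    exact_mod_cast Nat.centralBinom_succ_mul_factorial j
  field_simp
  rw [sq_sqrt pi_pos.le, show (4 : ℝ) ^ (j + 1) = 2 ^ (j + 1) * 2 ^ (j + 1) by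
    rw [← mul_pow]; norm_num]
  linear_combination (-2 ^ (j + 1) * π) * h

end Real

open Real

theorem integral_mul_sqrt_div_sub_eq_mul_integral (g : ℝ → ℝ) (β : ℝ) :
    ∫ x in (0 : ℝ)..β, g x * √(x / (β - x)) =
      β * ∫ t in (0 : ℝ)..1, g (β * t) * √(t / (1 - t)) := by
  rcases eq_or_ne β 0 with rfl | hβ
  · simp
  have h := intervalIntegral.smul_integral_comp_mul_left (a := 0) (b := 1)
    (fun x ↦ g x * √(x / (β - x))) β
  rw [mul_zero, mul_one] at h
  rw [← h, smul_eq_mul]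
  congr 1
  refine intervalIntegral.integral_congr fun t _ ↦ ?_
  rw [show β - β * t = β * (1 - t) by ring, mul_div_mul_left _ _ hβ]

theorem integral_sum_pow_mul_sqrt_div_sub (s : Finset ℕ) (c : ℕ → ℝ) (β : ℝ) :
    ∫ x in (0 : ℝ)..β, (∑ j ∈ s, c j * x ^ j) * √(x / (β - x)) =
      π * ∑ j ∈ s, c j * (j + 1).centralBinom * (β / 4) ^ (j + 1) := by
  have hsplit (t : ℝ) : (∑ j ∈ s, c j * (β * t) ^ j) * √(t / (1 - t)) =
      ∑ j ∈ s, c j * β ^ j * (t ^ j * √(t / (1 - t))) := by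
    rw [sum_mul]; exact sum_congr rfl fun j _ ↦ by ring
  rw [integral_mul_sqrt_div_sub_eq_mul_integral, funext hsplit, intervalIntegral.integral_finsetSum
    fun j _ ↦ (intervalIntegrable_pow_mul_sqrt_div_one_sub j).const_mul _, mul_sum, mul_sum]
  refine sum_congr rfl fun j _ ↦ ?_
  rw [intervalIntegral.integral_const_mul, integral_pow_mul_sqrt_div_one_sub, div_pow, pow_succ β]
  field_simp

theorem stmt_6_general (m : ℕ) (hm : 1 ≤ m) (q : ℕ → ℝ)
    (n : ℕ) (β : ℝ)
    (hint : 2 * π * n = ∫ x in (0:ℝ)..β,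
      (∑ k ∈ Finset.Icc 1 m, (k : ℝ) * q k * x ^ (k - 1)) * Real.sqrt (x / (β - x))) :
    8 * (n : ℝ) = 2 * q 1 * β +
      4 * ∑ k ∈ Finset.Icc 2 m, (k : ℝ) * (Nat.choose (2 * k) k : ℝ) * q k * (β / 4) ^ k := by
  have reindex (f : ℕ → ℝ) : ∑ k ∈ Icc 1 m, f k = ∑ j ∈ range m, f (j + 1) := by
    rw [range_eq_Ico, sum_Ico_add', zero_add, Ico_add_one_right_eq_Icc]
  have hQ' (x : ℝ) : ∑ k ∈ Icc 1 m, (k : ℝ) * q k * x ^ (k - 1) =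
      ∑ j ∈ range m, ((j + 1 : ℕ) : ℝ) * q (j + 1) * x ^ j := by
    rw [reindex]; simp only [Nat.add_sub_cancel]
  have hmoment : 2 * n = ∑ k ∈ Icc 1 m, (k : ℝ) * k.centralBinom * q k * (β / 4) ^ k := by
    apply mul_left_cancel₀ pi_ne_zero
    rw [← mul_assoc, mul_comm π, hint]
    simp_rw [hQ']
    rw [integral_sum_pow_mul_sqrt_div_sub, reindex]
    congr 1
    exact sum_congr rfl fun j _ ↦ by ring
  rw [← insert_Icc_add_one_left_eq_Icc hm, sum_insert (by simp)] at hmoment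
  simp only [Nat.centralBinom_eq_two_mul_choose] at hmoment
  norm_num at hmoment
  linarith

theorem stmt_6 (m : ℕ) (hm : 1 ≤ m) (q : ℕ → ℝ) (hqm : 0 < q m)
    (n : ℕ) (β : ℝ) (hβ : 0 < β)
    (hint : 2 * π * n = ∫ x in (0:ℝ)..β,
      (∑ k ∈ Finset.Icc 1 m, (k : ℝ) * q k * x ^ (k - 1)) * Real.sqrt (x / (β - x))) :
    8 * (n : ℝ) = 2 * q 1 * β +
      4 * ∑ k ∈ Finset.Icc 2 m, (k : ℝ) * (Nat.choose (2 * k) k : ℝ) * q k * (β / 4) ^ k :=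
  stmt_6_general m hm q n β hint
end

section
/- For every positive integer m, (4/(2m−1)) · ₂F₁(1, 1−m; 3/2−m; z) = (2/(m A_m)) ∑_{k=0}^{m−1} A_{m−1−k} z^k as polynomials in z, where A_j = 4^{-j}(2j choose j) (with A_0 = 1). -/
/-!
The hypergeometric coefficients telescope: since `(1)_j = j!`, the `j`-th coefficient is
`(1-m)_j / (3/2-m)_j = ∏_{i<j} (m-1-i) / (m-3/2-i)`, and each factor is the ratio
`A_{m-2-i} / A_{m-1-i}` by the recursion `(2n+2) A_{n+1} = (2n+1) A_n`. Hence the coefficient is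
`A_{m-1-j} / A_{m-1}`, and one more step of the recursion turns `4 / ((2m-1) A_{m-1})`
into `2 / (m A_m)`.
-/

/-- The Pochhammer symbol (rising factorial) for a real argument. -/
noncomputable def poch (a : ℝ) (j : ℕ) : ℝ := ∏ i ∈ Finset.range j, (a + i)

/-- The coefficients `A_j = 4^{-j} (2j choose j)`. -/
noncomputable def Acoef (j : ℕ) : ℝ := (4 : ℝ) ^ (-(j : ℤ)) * (Nat.choose (2 * j) j : ℝ)

lemma poch_succ (a : ℝ) (j : ℕ) : poch a (j + 1) = poch a j * (a + j) := by
  simp [poch, Finset.prod_range_succ]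

lemma poch_one (j : ℕ) : poch 1 j = j.factorial := by
  induction j with
  | zero => simp [poch]
  | succ j ih => rw [poch_succ, ih, Nat.factorial_succ]; push_cast; ring

lemma poch_ne_zero {a : ℝ} {j : ℕ} (h : ∀ i < j, a + i ≠ 0) : poch a j ≠ 0 :=
  Finset.prod_ne_zero_iff.mpr fun i hi => h i (Finset.mem_range.mp hi)

lemma poch_half_sub_natCast_ne_zero (n j : ℕ) : poch (1 / 2 - n) j ≠ 0 :=
  poch_ne_zero fun i _ h => by
    have : (2 * i + 1 : ℤ) = 2 * n := by exact_mod_cast (by linarith : (2 * i + 1 : ℝ) = 2 * n)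
    omega

lemma Acoef_eq (n : ℕ) : Acoef n = n.centralBinom / 4 ^ n := by
  rw [Acoef, zpow_neg, zpow_natCast, Nat.centralBinom, inv_mul_eq_div]

lemma Acoef_pos (n : ℕ) : 0 < Acoef n := by
  rw [Acoef_eq]
  have := n.centralBinom_pos
  positivity

lemma Acoef_succ (n : ℕ) : (2 * n + 2) * Acoef (n + 1) = (2 * n + 1) * Acoef n := by
  have h : ((n + 1 : ℕ) : ℝ) * (n + 1).centralBinom = 2 * (2 * n + 1) * n.centralBinom := by
    exact_mod_cast n.succ_mul_centralBinom_succ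
  rw [Acoef_eq, Acoef_eq, pow_succ]
  push_cast at h
  field_simp
  linear_combination 2 * h

lemma poch_neg_mul_Acoef (j k : ℕ) :
    poch (-((j + k : ℕ) : ℝ)) j * Acoef (j + k) = poch (1 / 2 - ((j + k : ℕ) : ℝ)) j * Acoef k := by
  induction j generalizing k with
  | zero => simp [poch]
  | succ j ih =>
    rw [show j + 1 + k = j + (k + 1) by omega, poch_succ, poch_succ]
    have hk := Acoef_succ k
    have ih' := ih (k + 1)
    -- keep `push_cast` from rewriting the Pochhammer arguments, which must still match `ih'`
    set P := poch (-((j + (k + 1) : ℕ) : ℝ)) j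
    set Q := poch (1 / 2 - ((j + (k + 1) : ℕ) : ℝ)) j
    push_cast
    linear_combination (-(k + 1 : ℝ)) * ih' - Q / 2 * hk

lemma hypergeometric_coeff_eq (j k : ℕ) :
    poch 1 j * poch (1 - ((j + k + 1 : ℕ) : ℝ)) j /
        (poch (3 / 2 - ((j + k + 1 : ℕ) : ℝ)) j * j.factorial) =
      Acoef k / Acoef (j + k) := by
  have hfac : (j.factorial : ℝ) ≠ 0 := by exact_mod_cast j.factorial_ne_zero
  have hA := (Acoef_pos (j + k)).ne'
  have hhalf := poch_half_sub_natCast_ne_zero (j + k) j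
  rw [poch_one, show 1 - ((j + k + 1 : ℕ) : ℝ) = -((j + k : ℕ) : ℝ) by push_cast; ring,
    show 3 / 2 - ((j + k + 1 : ℕ) : ℝ) = 1 / 2 - ((j + k : ℕ) : ℝ) by push_cast; ring,
    div_eq_div_iff (mul_ne_zero hhalf hfac) hA]
  linear_combination (j.factorial : ℝ) * poch_neg_mul_Acoef j k

lemma four_div_mul_div_Acoef (n k : ℕ) :
    4 / (2 * ((n + 1 : ℕ) : ℝ) - 1) * (Acoef k / Acoef n) =
      2 / (((n + 1 : ℕ) : ℝ) * Acoef (n + 1)) * Acoef k := by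
  have hrec := Acoef_succ n
  have hA := (Acoef_pos n).ne'
  have hA' := (Acoef_pos (n + 1)).ne'
  have hodd : 2 * ((n + 1 : ℕ) : ℝ) - 1 ≠ 0 := by push_cast; ring_nf; positivity
  have hn : ((n + 1 : ℕ) : ℝ) ≠ 0 := by positivity
  rw [div_mul_div_comm, div_mul_eq_mul_div, div_eq_div_iff (mul_ne_zero hodd hA)
    (mul_ne_zero hn hA')]
  push_cast
  linear_combination 2 * Acoef k * hrec

theorem stmt_9_general (m : ℕ) (z : ℝ) :
    (4 / (2 * (m : ℝ) - 1)) *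
      ∑ j ∈ Finset.range m,
        poch 1 j * poch (1 - (m : ℝ)) j / (poch (3/2 - (m : ℝ)) j * (Nat.factorial j : ℝ)) * z ^ j =
    (2 / ((m : ℝ) * Acoef m)) * ∑ k ∈ Finset.range m, Acoef (m - 1 - k) * z ^ k := by
  rw [Finset.mul_sum, Finset.mul_sum]
  refine Finset.sum_congr rfl fun j hj => ?_
  obtain ⟨k, rfl⟩ : ∃ k, m = j + k + 1 := ⟨m - 1 - j, by have := Finset.mem_range.mp hj; omega⟩
  rw [show j + k + 1 - 1 - j = k by omega, ← mul_assoc, ← mul_assoc, hypergeometric_coeff_eq,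
    four_div_mul_div_Acoef]

theorem stmt_9 (m : ℕ) (hm : 0 < m) (z : ℝ) :
    (4 / (2 * (m : ℝ) - 1)) *
      ∑ j ∈ Finset.range m,
        poch 1 j * poch (1 - (m : ℝ)) j / (poch (3/2 - (m : ℝ)) j * (Nat.factorial j : ℝ)) * z ^ j =
    (2 / ((m : ℝ) * Acoef m)) * ∑ k ∈ Finset.range m, Acoef (m - 1 - k) * z ^ k :=
  stmt_9_general m z
end

section
/- For β > 0, ∫₀^β e^x √(x/(β−x)) dx = (πβ/2) e^{β/2} [I₀(β/2) + I₁(β/2)], where I₀ and I₁ are modified Bessel functions of the first kind. -/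
open Real

/-- The modified Bessel function of the first kind of nonnegative integer order. -/
noncomputable def besselI (ν : ℕ) (z : ℝ) : ℝ :=
  ∑' k : ℕ, (z / 2) ^ (ν + 2 * k) / ((Nat.factorial k : ℝ) * (Nat.factorial (ν + k) : ℝ))

/-!
The substitution `x = (β/2)(1 + cos θ)` turns `√(x/(β-x)) dx` into `(β/2)(1 + cos θ) dθ`, so the
integral becomes `(β/2) e^{β/2} ∫₀^π e^{(β/2) cos θ} (1 + cos θ) dθ`. Expanding `e^{c cos θ}` in
its power series and integrating term by term against the Wallis integrals `∫₀^π cosⁿ θ dθ`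
(zero for odd `n`) gives `∫₀^π e^{c cos θ} dθ = π I₀(c)` and `∫₀^π e^{c cos θ} cos θ dθ = π I₁(c)`.
-/

open MeasureTheory Set Nat

theorem integral_cos_pow_odd (k : ℕ) : ∫ θ in (0:ℝ)..π, cos θ ^ (2 * k + 1) = 0 := by
  simpa using integral_sin_pow_mul_cos_pow_odd 0 k (a := 0) (b := π)

theorem integral_cos_pow_even (k : ℕ) :
    ∫ θ in (0:ℝ)..π, cos θ ^ (2 * k) = π * (2 * k)! / (2 ^ (2 * k) * (k ! : ℝ) ^ 2) := by
  induction k with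
  | zero => simp
  | succ k ih =>
    rw [mul_succ, integral_cos_pow, ih, sin_pi, sin_zero]
    push_cast [factorial_succ, show 2 * k + 1 = (2 * k).succ from rfl]
    field_simp
    ring

theorem hasSum_integral_exp_mul_cos_mul_cos_pow (c : ℝ) (m : ℕ) :
    HasSum (fun n : ℕ => c ^ n / n ! * ∫ θ in (0:ℝ)..π, cos θ ^ (n + m))
      (∫ θ in (0:ℝ)..π, exp (c * cos θ) * cos θ ^ m) := by
  simp_rw [← intervalIntegral.integral_const_mul]
  refine intervalIntegral.hasSum_integral_of_dominated_convergence (fun n _ => |c| ^ n / n !)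
    (fun n => by fun_prop) (fun n => ae_of_all _ fun θ _ => ?_)
    (ae_of_all _ fun _ _ => Real.summable_pow_div_factorial |c|) intervalIntegrable_const
    (ae_of_all _ fun θ _ => ?_)
  · rw [norm_mul, norm_div, norm_pow, norm_pow, Real.norm_eq_abs, Real.norm_natCast]
    exact mul_le_of_le_one_right (by positivity)
      (pow_le_one₀ (norm_nonneg _) (abs_cos_le_one θ))
  · have h_term (n : ℕ) : c ^ n / n ! * cos θ ^ (n + m) = (c * cos θ) ^ n / n ! * cos θ ^ m := by
      ring
    simpa only [h_term, ← exp_eq_exp_ℝ] using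
      (NormedSpace.expSeries_div_hasSum_exp (c * cos θ)).mul_right (cos θ ^ m)

theorem integral_exp_mul_cos (c : ℝ) : ∫ θ in (0:ℝ)..π, exp (c * cos θ) = π * besselI 0 c := by
  have h := (hasSum_integral_exp_mul_cos_mul_cos_pow c 0).tsum_eq
  simp only [pow_zero, mul_one, add_zero] at h
  rw [← h, ← (mul_right_injective₀ two_ne_zero).tsum_eq, besselI, ← tsum_mul_left]
  · congr 1 with k
    rw [integral_cos_pow_even, div_pow, zero_add, zero_add]
    field_simp
  · intro n hn
    rcases Nat.even_or_odd' n with ⟨k, rfl | rfl⟩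
    · exact ⟨k, rfl⟩
    · simp [integral_cos_pow_odd] at hn

theorem integral_exp_mul_cos_mul_cos (c : ℝ) :
    ∫ θ in (0:ℝ)..π, exp (c * cos θ) * cos θ = π * besselI 1 c := by
  have h := (hasSum_integral_exp_mul_cos_mul_cos_pow c 1).tsum_eq
  simp only [pow_one] at h
  have h_inj : Function.Injective (fun k : ℕ => 2 * k + 1) := fun a b h => by simpa using h
  rw [← h, ← h_inj.tsum_eq, besselI, ← tsum_mul_left]
  · congr 1 with k
    rw [show 2 * k + 1 + 1 = 2 * (k + 1) by ring, integral_cos_pow_even, div_pow,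
      show 2 * (k + 1) = (2 * k + 1) + 1 by ring, factorial_succ (2 * k + 1), add_comm 1 k,
      factorial_succ k]
    push_cast
    field_simp
    ring
  · intro n hn
    rcases Nat.even_or_odd' n with ⟨k, rfl | rfl⟩
    · simp [integral_cos_pow_odd] at hn
    · exact ⟨k, rfl⟩

theorem image_cos_Ioo : cos '' Ioo 0 π = Ioo (-1) 1 :=
  cosPartialHomeomorph.image_source_eq_target

theorem sqrt_one_add_cos_div_one_sub_cos {θ : ℝ} (h₀ : 0 < θ) (hπ : θ < π) :
    √((1 + cos θ) / (1 - cos θ)) = (1 + cos θ) / sin θ := by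
  have hsin : 0 < sin θ := sin_pos_of_pos_of_lt_pi h₀ hπ
  have hcos : -1 < cos θ := by
    simpa using cos_lt_cos_of_nonneg_of_le_pi h₀.le le_rfl hπ
  rw [← sqrt_sq (div_pos (by linarith : 0 < 1 + cos θ) hsin).le, div_pow, sin_sq, sq,
    show 1 - cos θ ^ 2 = (1 - cos θ) * (1 + cos θ) by ring, mul_div_mul_right _ _ (by linarith)]

theorem integral_exp_mul_sqrt_div_sub (β : ℝ) (hβ : 0 < β) :
    ∫ x in (0:ℝ)..β, exp x * √(x / (β - x)) =
      ∫ θ in (0:ℝ)..π, β / 2 * exp (β / 2 * (1 + cos θ)) * (1 + cos θ) := by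
  set g : ℝ → ℝ := fun θ => β / 2 * cos θ + β / 2
  have h_image : g '' Ioo 0 π = Ioo 0 β := by
    rw [show g = (β / 2 * · + β / 2) ∘ cos from rfl, image_comp, image_cos_Ioo,
      image_affine_Ioo (by positivity)]
    congr 1 <;> ring
  have h_deriv (θ) (_ : θ ∈ Ioo 0 π) : HasDerivWithinAt g (β / 2 * -sin θ) (Ioo 0 π) θ :=
    (((hasDerivAt_cos θ).const_mul (β / 2)).add_const (β / 2)).hasDerivWithinAt
  have h_inj : InjOn g (Ioo 0 π) := fun a ha b hb hab =>
    injOn_cos (Ioo_subset_Icc_self ha) (Ioo_subset_Icc_self hb)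
      (mul_left_cancel₀ (by positivity : β / 2 ≠ 0) (add_right_cancel hab))
  have h := integral_image_eq_integral_abs_deriv_smul measurableSet_Ioo h_deriv h_inj
    (fun x => exp x * √(x / (β - x)))
  rw [h_image] at h
  rw [intervalIntegral.integral_of_le hβ.le, integral_Ioc_eq_integral_Ioo, h,
    intervalIntegral.integral_of_le pi_pos.le, integral_Ioc_eq_integral_Ioo]
  refine setIntegral_congr_fun measurableSet_Ioo fun θ ⟨h₀, hπ⟩ => ?_
  have hsin : 0 < sin θ := sin_pos_of_pos_of_lt_pi h₀ hπ
  have hg : g θ = β / 2 * (1 + cos θ) := by simp only [g]; ring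
  have h_ratio : g θ / (β - g θ) = (1 + cos θ) / (1 - cos θ) := by
    rw [hg, show β - β / 2 * (1 + cos θ) = β / 2 * (1 - cos θ) by ring,
      mul_div_mul_left _ _ (by positivity)]
  rw [smul_eq_mul, h_ratio, sqrt_one_add_cos_div_one_sub_cos h₀ hπ, abs_mul, abs_neg,
    abs_of_pos hsin, abs_of_pos (by positivity : 0 < β / 2), hg]
  field_simp

theorem stmt_16 (β : ℝ) (hβ : 0 < β) :
    ∫ x in (0:ℝ)..β, Real.exp x * Real.sqrt (x / (β - x)) =
      (π * β / 2) * Real.exp (β / 2) * (besselI 0 (β / 2) + besselI 1 (β / 2)) := by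
  have h_split (θ : ℝ) : β / 2 * exp (β / 2 * (1 + cos θ)) * (1 + cos θ) =
      β / 2 * exp (β / 2) * (exp (β / 2 * cos θ) + exp (β / 2 * cos θ) * cos θ) := by
    rw [mul_one_add (β / 2) (cos θ), exp_add]
    ring
  rw [integral_exp_mul_sqrt_div_sub β hβ, intervalIntegral.integral_congr fun θ _ => h_split θ,
    intervalIntegral.integral_const_mul, intervalIntegral.integral_add
      (Continuous.intervalIntegrable (by fun_prop) _ _)
      (Continuous.intervalIntegrable (by fun_prop) _ _),
    integral_exp_mul_cos, integral_exp_mul_cos_mul_cos]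
  ring
end
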